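/- Let γ > 0 and τ > 0. For every t ≥ 0, the convolution of the input signal erf(t/γ) with the second-order filter impulse response h(t) = (t/τ²)·e^{−t/τ} equals: ∫₀ᵗ erf(λ/γ)·((t−λ)/τ²)·e^{−(t−λ)/τ} dλ = erf(t/γ) + (e^{−t/τ}/τ)·{ [γ²/(2τ) − (t + τ)]·exp(γ²/(4τ²))·[erf(γ/(2τ)) − erf(γ/(2τ) − t/γ)] − (γ/√π)·exp(γ²/(4τ²))·exp(−(t/γ − γ/(2τ))²) + γ/√π }. -/

import Mathlib

open Real intervalIntegral

/-- The error function. -/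
noncomputable def erf (x : ℝ) : ℝ :=
  (2 / Real.sqrt π) * ∫ t in (0:ℝ)..x, Real.exp (-t ^ 2)

/-!
Integrating `erf (l/γ)` against the kernel by parts leaves the product
`exp (-(l/γ)²) · exp (l/τ)`; completing the square rewrites it as
`exp (γ²/(4τ²)) · exp (-(l/γ - γ/(2τ))²)`, whose primitive is again an `erf`, now shifted by
`γ/(2τ)`. This gives a closed-form primitive of the integrand in `l`, and the formula is its
increment over `[0, t]`.
-/

lemma erf_zero : erf 0 = 0 := by simp [erf]

lemma erf_neg (x : ℝ) : erf (-x) = -erf x := by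
  have hodd : ∫ s in (0:ℝ)..(-x), Real.exp (-s ^ 2) = -∫ s in (0:ℝ)..x, Real.exp (-s ^ 2) := by
    calc ∫ s in (0:ℝ)..(-x), Real.exp (-s ^ 2) = ∫ s in (0:ℝ)..(-x), Real.exp (-(-s) ^ 2) := by
          simp
      _ = ∫ s in -(-x)..(-0), Real.exp (-s ^ 2) := integral_comp_neg (fun s => Real.exp (-s ^ 2))
      _ = -∫ s in (0:ℝ)..x, Real.exp (-s ^ 2) := by rw [neg_neg, neg_zero, integral_symm]
  simp [erf, hodd]

lemma hasDerivAt_erf (x : ℝ) : HasDerivAt erf (2 / Real.sqrt π * Real.exp (-x ^ 2)) x := by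
  have hc : Continuous fun t : ℝ => Real.exp (-t ^ 2) := by fun_prop
  exact (integral_hasDerivAt_right (hc.intervalIntegrable 0 x)
    (hc.stronglyMeasurableAtFilter _ _) hc.continuousAt).const_mul _

lemma HasDerivAt.erf {f : ℝ → ℝ} {f' x : ℝ} (hf : HasDerivAt f f' x) :
    HasDerivAt (fun y => erf (f y)) (2 / Real.sqrt π * Real.exp (-f x ^ 2) * f') x :=
  (hasDerivAt_erf (f x)).comp x hf

@[fun_prop]
lemma continuous_erf : Continuous erf :=
  continuous_iff_continuousAt.2 fun x => (hasDerivAt_erf x).continuousAt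

lemma exp_sub_mul_exp_neg_sq_shift (γ τ t l : ℝ) (hγ : γ ≠ 0) (hτ : τ ≠ 0) :
    Real.exp (γ ^ 2 / (4 * τ ^ 2) - t / τ) * Real.exp (-(l / γ - γ / (2 * τ)) ^ 2) =
      Real.exp (-(l / γ) ^ 2) * Real.exp (-(t - l) / τ) := by
  rw [← Real.exp_add, ← Real.exp_add]
  congr 1
  field_simp
  ring

lemma hasDerivAt_erf_div_mul_filterStep (γ τ t l : ℝ) (hτ : τ ≠ 0) :
    HasDerivAt (fun x => erf (x / γ) * ((t - x + τ) / τ) * Real.exp (-(t - x) / τ))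
      (erf (l / γ) * ((t - l) / τ ^ 2) * Real.exp (-(t - l) / τ) +
        2 / (γ * Real.sqrt π) * ((t - l + τ) / τ) *
          (Real.exp (-(l / γ) ^ 2) * Real.exp (-(t - l) / τ))) l := by
  have hdiv : HasDerivAt (fun x : ℝ => x / γ) (1 / γ) l := by
    simpa using (hasDerivAt_id l).div_const γ
  have hweight : HasDerivAt (fun x : ℝ => (t - x + τ) / τ) (-1 / τ) l := by
    simpa using (((hasDerivAt_id l).const_sub t).add_const τ).div_const τ
  have hdecay : HasDerivAt (fun x : ℝ => -(t - x) / τ) (1 / τ) l := by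
    simpa using ((hasDerivAt_id l).const_sub t).neg.div_const τ
  refine ((hdiv.erf.mul hweight).mul hdecay.exp).congr_deriv ?_
  simp only [Pi.mul_apply]
  field_simp
  ring

lemma hasDerivAt_shifted_erf_term (γ τ t l : ℝ) (hγ : γ ≠ 0) (hτ : τ ≠ 0) :
    HasDerivAt (fun x => Real.exp (γ ^ 2 / (4 * τ ^ 2) - t / τ) *
        ((t + τ - γ ^ 2 / (2 * τ)) / τ * erf (x / γ - γ / (2 * τ)) +
          γ / (τ * Real.sqrt π) * Real.exp (-(x / γ - γ / (2 * τ)) ^ 2)))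
      (2 / (γ * Real.sqrt π) * ((t - l + τ) / τ) *
        (Real.exp (-(l / γ) ^ 2) * Real.exp (-(t - l) / τ))) l := by
  have hshift : HasDerivAt (fun x : ℝ => x / γ - γ / (2 * τ)) (1 / γ) l := by
    simpa using ((hasDerivAt_id l).div_const γ).sub_const (γ / (2 * τ))
  have hsq : HasDerivAt (fun x : ℝ => -(x / γ - γ / (2 * τ)) ^ 2)
      (-(2 * (l / γ - γ / (2 * τ)) * (1 / γ))) l := by
    simpa using (hshift.fun_pow 2).fun_neg
  refine (((hshift.erf.const_mul _).add (hsq.exp.const_mul _)).const_mul _).congr_deriv ?_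
  rw [← exp_sub_mul_exp_neg_sq_shift γ τ t l hγ hτ]
  field_simp
  ring

noncomputable def erfFilterPrimitive (γ τ t l : ℝ) : ℝ :=
  erf (l / γ) * ((t - l + τ) / τ) * Real.exp (-(t - l) / τ) -
    Real.exp (γ ^ 2 / (4 * τ ^ 2) - t / τ) *
      ((t + τ - γ ^ 2 / (2 * τ)) / τ * erf (l / γ - γ / (2 * τ)) +
        γ / (τ * Real.sqrt π) * Real.exp (-(l / γ - γ / (2 * τ)) ^ 2))

lemma hasDerivAt_erfFilterPrimitive (γ τ t l : ℝ) (hγ : γ ≠ 0) (hτ : τ ≠ 0) :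
    HasDerivAt (erfFilterPrimitive γ τ t)
      (erf (l / γ) * ((t - l) / τ ^ 2) * Real.exp (-(t - l) / τ)) l :=
  ((hasDerivAt_erf_div_mul_filterStep γ τ t l hτ).sub
    (hasDerivAt_shifted_erf_term γ τ t l hγ hτ)).congr_deriv (add_sub_cancel_right _ _)

lemma erfFilterPrimitive_self (γ τ t : ℝ) (hτ : τ ≠ 0) :
    erfFilterPrimitive γ τ t t =
      erf (t / γ) - Real.exp (γ ^ 2 / (4 * τ ^ 2) - t / τ) *
        ((t + τ - γ ^ 2 / (2 * τ)) / τ * erf (t / γ - γ / (2 * τ)) +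
          γ / (τ * Real.sqrt π) * Real.exp (-(t / γ - γ / (2 * τ)) ^ 2)) := by
  simp [erfFilterPrimitive, hτ]

lemma erfFilterPrimitive_zero (γ τ t : ℝ) :
    erfFilterPrimitive γ τ t 0 =
      (t + τ - γ ^ 2 / (2 * τ)) / τ * Real.exp (γ ^ 2 / (4 * τ ^ 2) - t / τ) *
        erf (γ / (2 * τ)) - γ / (τ * Real.sqrt π) * Real.exp (-t / τ) := by
  have hexp : Real.exp (γ ^ 2 / (4 * τ ^ 2) - t / τ) * Real.exp (-(-(γ / (2 * τ))) ^ 2) =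
      Real.exp (-t / τ) := by
    rw [← Real.exp_add]
    congr 1
    ring
  simp only [erfFilterPrimitive, zero_div, zero_sub, erf_neg, erf_zero]
  linear_combination (-(γ / (τ * Real.sqrt π))) * hexp

theorem filter_output_erf_step_general (γ τ : ℝ) (hγ : 0 < γ) (hτ : 0 < τ) (t : ℝ) :
    ∫ l in (0:ℝ)..t, erf (l / γ) * ((t - l) / τ ^ 2) * Real.exp (-(t - l) / τ) =
      erf (t / γ) +
        (Real.exp (-t / τ) / τ) *
          ((γ ^ 2 / (2 * τ) - (t + τ)) * Real.exp (γ ^ 2 / (4 * τ ^ 2)) *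
              (erf (γ / (2 * τ)) - erf (γ / (2 * τ) - t / γ)) -
            (γ / Real.sqrt π) * Real.exp (γ ^ 2 / (4 * τ ^ 2)) *
              Real.exp (-(t / γ - γ / (2 * τ)) ^ 2) +
            γ / Real.sqrt π) := by
  have hcont : Continuous fun l : ℝ =>
      erf (l / γ) * ((t - l) / τ ^ 2) * Real.exp (-(t - l) / τ) := by
    fun_prop
  rw [integral_eq_sub_of_hasDerivAt
      (fun l _ => hasDerivAt_erfFilterPrimitive γ τ t l hγ.ne' hτ.ne')
      (hcont.intervalIntegrable 0 t),
    erfFilterPrimitive_self γ τ t hτ.ne', erfFilterPrimitive_zero,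
    show γ / (2 * τ) - t / γ = -(t / γ - γ / (2 * τ)) by ring, erf_neg,
    show γ ^ 2 / (4 * τ ^ 2) - t / τ = γ ^ 2 / (4 * τ ^ 2) + -t / τ by ring, Real.exp_add]
  field_simp
  ring

/-- Output of a second order linear filter, with impulse response
`h(t) = (t/τ²) e^{−t/τ}`, driven by the error function step signal `erf(t/γ)`. -/
theorem filter_output_erf_step (γ τ : ℝ) (hγ : 0 < γ) (hτ : 0 < τ) (t : ℝ) (ht : 0 ≤ t) :
    ∫ l in (0:ℝ)..t, erf (l / γ) * ((t - l) / τ ^ 2) * Real.exp (-(t - l) / τ) =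
      erf (t / γ) +
        (Real.exp (-t / τ) / τ) *
          ((γ ^ 2 / (2 * τ) - (t + τ)) * Real.exp (γ ^ 2 / (4 * τ ^ 2)) *
              (erf (γ / (2 * τ)) - erf (γ / (2 * τ) - t / γ)) -
            (γ / Real.sqrt π) * Real.exp (γ ^ 2 / (4 * τ ^ 2)) *
              Real.exp (-(t / γ - γ / (2 * τ)) ^ 2) +
            γ / Real.sqrt π) :=
  filter_output_erf_step_general γ τ hγ hτ t
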